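/- Group-closure underlying swap(Φ,Φ,Φ) ⊆ ¼Φ: for all μ, ν, λ ∈ ℤ₄ and all odd m, m', m'' ∈ ℤ₈, there exist ξ ∈ ℤ₄, an odd m* ∈ ℤ₈, and a scalar c ∈ {1, −1, i, −i} such that σ_λ R^{m''} (σ_ν R^{m'})‾ σ_μ R^{m} = c · σ_ξ R^{m*}, where X‾ denotes the entrywise complex conjugate of X. -/

import Mathlib

open Matrix Kronecker Complex

noncomputable section

/-- The Pauli matrices indexed by ℤ₄. -/
def pauli : ZMod 4 → Matrix (Fin 2) (Fin 2) ℂ := fun μ =>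
  if μ = 0 then 1
  else if μ = 1 then !![0, 1; 1, 0]
  else if μ = 2 then !![0, -Complex.I; Complex.I, 0]
  else !![1, 0; 0, -1]

/-- The rotation R = diag(e^{-iπ/8}, e^{iπ/8}). -/
def R : Matrix (Fin 2) (Fin 2) ℂ :=
  !![Complex.exp (-(Real.pi / 8 : ℝ) * Complex.I), 0;
     0, Complex.exp ((Real.pi / 8 : ℝ) * Complex.I)]

/-- The Bell vector |Φ⁺⟩ = (|00⟩+|11⟩)/√2. -/
def bell : Fin 2 × Fin 2 → ℂ := fun p =>
  if p.1 = p.2 then ((Real.sqrt 2 : ℝ) : ℂ)⁻¹ else 0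

/-- The Bell projector P_Φ = |Φ⁺⟩⟨Φ⁺|. -/
def PΦ : Matrix (Fin 2 × Fin 2) (Fin 2 × Fin 2) ℂ :=
  Matrix.of fun p q => bell p * (starRingEnd ℂ) (bell q)

/-- Φ⁺_{μ,m} = ((σ_μ R^m)† ⊗ I) P_Φ ((σ_μ R^m) ⊗ I). -/
def PhiProj (μ : ZMod 4) (m : ZMod 8) : Matrix (Fin 2 × Fin 2) (Fin 2 × Fin 2) ℂ :=
  ((pauli μ * R ^ m.val)ᴴ ⊗ₖ (1 : Matrix (Fin 2) (Fin 2) ℂ)) * PΦ *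
    ((pauli μ * R ^ m.val) ⊗ₖ (1 : Matrix (Fin 2) (Fin 2) ℂ))

/-- r = 2^{1/4}. -/
def r : ℝ := (2 : ℝ) ^ ((1 : ℝ) / 4)

/-- The stretched stabilizer states Ω. -/
def Ω : Set (Matrix (Fin 2) (Fin 2) ℂ) :=
  { (1 / 2 : ℂ) • (1 + (r : ℂ) • pauli 1),
    (1 / 2 : ℂ) • (1 - (r : ℂ) • pauli 1),
    (1 / 2 : ℂ) • (1 + (r : ℂ) • pauli 2),
    (1 / 2 : ℂ) • (1 - (r : ℂ) • pauli 2),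
    (1 / 2 : ℂ) • (1 + pauli 3),
    (1 / 2 : ℂ) • (1 - pauli 3) }

/-- The set Φ of entangled states/effects. -/
def PhiSet : Set (Matrix (Fin 2 × Fin 2) (Fin 2 × Fin 2) ℂ) :=
  { Q | ∃ μ : ZMod 4, ∃ m : ZMod 8, m ∈ ({1, 3, 5, 7} : Set (ZMod 8)) ∧ Q = PhiProj μ m }

/-- Place a 4×4 matrix `Q` on tensor factors (2,3) of (ℂ²)⊗⁴ (identity on factors 1 and 4). -/
def mid (Q : Matrix (Fin 2 × Fin 2) (Fin 2 × Fin 2) ℂ) :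
    Matrix ((Fin 2 × Fin 2) × (Fin 2 × Fin 2)) ((Fin 2 × Fin 2) × (Fin 2 × Fin 2)) ℂ :=
  Matrix.of fun p q =>
    (1 : Matrix (Fin 2) (Fin 2) ℂ) p.1.1 q.1.1 *
      Q (p.1.2, p.2.1) (q.1.2, q.2.1) *
      (1 : Matrix (Fin 2) (Fin 2) ℂ) p.2.2 q.2.2

/-- Partial trace over the first tensor factor of ℂ² ⊗ ℂ². -/
def ptr1 (M : Matrix (Fin 2 × Fin 2) (Fin 2 × Fin 2) ℂ) : Matrix (Fin 2) (Fin 2) ℂ :=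
  Matrix.of fun i j => ∑ a : Fin 2, M (a, i) (a, j)

/-- Partial trace over the second tensor factor of ℂ² ⊗ ℂ². -/
def ptr2 (M : Matrix (Fin 2 × Fin 2) (Fin 2 × Fin 2) ℂ) : Matrix (Fin 2) (Fin 2) ℂ :=
  Matrix.of fun i j => ∑ a : Fin 2, M (i, a) (j, a)

/-- Partial trace over the second and third tensor factors of (ℂ²)⊗⁴. -/
def ptr23
    (M : Matrix ((Fin 2 × Fin 2) × (Fin 2 × Fin 2)) ((Fin 2 × Fin 2) × (Fin 2 × Fin 2)) ℂ) :
    Matrix (Fin 2 × Fin 2) (Fin 2 × Fin 2) ℂ :=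
  Matrix.of fun p q => ∑ b : Fin 2, ∑ c : Fin 2, M ((p.1, b), (c, p.2)) ((q.1, b), (c, q.2))

end

/-!
The matrices `c • (σ_ξ * R ^ k)` with `c ^ 4 = 1` are closed under products, and the parity of `k`
is carried along: a Pauli matrix either commutes with `R` or conjugates it to `R⁻¹ = R ^ 15`, Pauli
matrices multiply to Pauli matrices up to a fourth root of unity, and entrywise conjugation sends
`σ_ξ` to `±σ_ξ` and `R` to `R ^ 15`. The triple product thus has this form with
`k ≡ m'' + m' + m` odd, and `R ^ 8 = -1` reduces `k` modulo 8 at the cost of a sign.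
-/

lemma ZMod.four_cases (a : ZMod 4) : a = 0 ∨ a = 1 ∨ a = 2 ∨ a = 3 := by
  revert a
  decide

@[simp] lemma pauli_zero : pauli 0 = 1 := rfl
@[simp] lemma pauli_one : pauli 1 = !![0, 1; 1, 0] := rfl
@[simp] lemma pauli_two : pauli 2 = !![0, -I; I, 0] := rfl
@[simp] lemma pauli_three : pauli 3 = !![1, 0; 0, -1] := rfl

noncomputable def ω : ℂ := exp ((Real.pi / 8 : ℝ) * I)

lemma ω_pow_eight : ω ^ 8 = -1 := by
  rw [ω, ← exp_nat_mul, ← exp_pi_mul_I]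
  push_cast
  ring_nf

lemma ω_pow_sixteen : ω ^ 16 = 1 := by
  rw [show 16 = 8 * 2 by rfl, pow_mul, ω_pow_eight]
  norm_num

lemma conj_ω : starRingEnd ℂ ω = ω⁻¹ := by
  rw [ω, ← exp_conj, ← exp_neg, map_mul, conj_ofReal, conj_I, mul_neg]

lemma R_eq_diagonal : R = diagonal ![ω⁻¹, ω] := by
  rw [R, ω, ← exp_neg, neg_mul]
  ext i j
  fin_cases i <;> fin_cases j <;> rfl

lemma R_pow (k : ℕ) : R ^ k = diagonal ![ω⁻¹ ^ k, ω ^ k] := by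
  rw [R_eq_diagonal, diagonal_pow]
  congr 1
  ext i
  fin_cases i <;> rfl

lemma R_pow_eight : R ^ 8 = -1 := by
  rw [R_pow, inv_pow, ω_pow_eight]
  ext i j
  fin_cases i <;> fin_cases j <;> simp

lemma R_pow_fifteen : R ^ 15 = diagonal ![ω, ω⁻¹] := by
  have h : ω ^ 15 = ω⁻¹ := eq_inv_of_mul_eq_one_left (by rw [← pow_succ, ω_pow_sixteen])
  rw [R_pow, inv_pow, h, inv_inv]

lemma map_conj_R : R.map (starRingEnd ℂ) = R ^ 15 := by
  rw [R_pow_fifteen, R_eq_diagonal, diagonal_map (map_zero _)]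
  congr 1
  ext i
  fin_cases i <;> simp [conj_ω]

lemma semiconjBy_pauli_R (ξ : ZMod 4) : ∃ s : ℕ, Odd s ∧ SemiconjBy (pauli ξ) (R ^ s) R := by
  obtain rfl | rfl | rfl | rfl := ZMod.four_cases ξ <;>
    [refine ⟨1, odd_one, ?_⟩; refine ⟨15, by decide, ?_⟩;
     refine ⟨15, by decide, ?_⟩; refine ⟨1, odd_one, ?_⟩] <;>
  · simp only [SemiconjBy, pow_one, R_pow_fifteen]
    rw [R_eq_diagonal]
    ext i j
    fin_cases i <;> fin_cases j <;> simp [mul_comm]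

lemma map_conj_pauli (ξ : ZMod 4) :
    ∃ c : ℂ, c ^ 4 = 1 ∧ (pauli ξ).map (starRingEnd ℂ) = c • pauli ξ := by
  obtain rfl | rfl | rfl | rfl := ZMod.four_cases ξ <;>
    [refine ⟨1, one_pow 4, ?_⟩; refine ⟨1, one_pow 4, ?_⟩;
     refine ⟨-1, by norm_num, ?_⟩; refine ⟨1, one_pow 4, ?_⟩] <;>
  · ext i j
    fin_cases i <;> fin_cases j <;> simp

-- σ₀ is the unit, σₐ² = 1, and σₐσ_b = i ε_{abc} σ_c for distinct a, b ≠ 0.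
lemma pauli_mul_pauli (a b : ZMod 4) :
    ∃ c : ℂ, ∃ ξ : ZMod 4, c ^ 4 = 1 ∧ pauli a * pauli b = c • pauli ξ := by
  obtain rfl | rfl | rfl | rfl := ZMod.four_cases a <;>
  obtain rfl | rfl | rfl | rfl := ZMod.four_cases b <;>
    [use 1, 0; use 1, 1; use 1, 2; use 1, 3;
     use 1, 1; use 1, 0; use I, 3; use -I, 2;
     use 1, 2; use -I, 3; use 1, 0; use I, 1;
     use 1, 3; use I, 2; use -I, 1; use 1, 0] <;>
  · refine ⟨by norm_num [I_pow_four], ?_⟩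
    ext i j
    fin_cases i <;> fin_cases j <;> simp [Matrix.mul_apply]

lemma mem_of_pow_four_eq_one {c : ℂ} (hc : c ^ 4 = 1) :
    c ∈ ({1, -1, I, -I} : Set ℂ) := by
  have h : (c - 1) * (c + 1) * (c - I) * (c + I) = 0 := by
    linear_combination hc - (c ^ 2 - 1) * I_sq
  simp only [mul_eq_zero, sub_eq_zero, add_eq_zero_iff_eq_neg] at h
  simp only [Set.mem_insert_iff, Set.mem_singleton_iff]
  tauto

lemma R_pow_eq_neg_one_pow_smul (k : ℕ) : R ^ k = (-1 : ℂ) ^ (k / 8) • R ^ (k % 8) := by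
  conv_lhs => rw [← Nat.div_add_mod k 8, pow_add, pow_mul, R_pow_eight]
  rw [← neg_one_smul ℂ (1 : Matrix (Fin 2) (Fin 2) ℂ), smul_pow, one_pow, smul_mul_assoc, one_mul]

def IsPauliRot (M : Matrix (Fin 2) (Fin 2) ℂ) (p : ZMod 2) : Prop :=
  ∃ c : ℂ, ∃ ξ : ZMod 4, ∃ k : ℕ, c ^ 4 = 1 ∧ (k : ZMod 2) = p ∧ M = c • (pauli ξ * R ^ k)

lemma isPauliRot_pauli_mul_R_pow (ξ : ZMod 4) (k : ℕ) : IsPauliRot (pauli ξ * R ^ k) k :=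
  ⟨1, ξ, k, one_pow 4, rfl, (one_smul ℂ _).symm⟩

lemma IsPauliRot.mul {M N : Matrix (Fin 2) (Fin 2) ℂ} {p q : ZMod 2}
    (hM : IsPauliRot M p) (hN : IsPauliRot N q) : IsPauliRot (M * N) (p + q) := by
  obtain ⟨c, ξ, k, hc, rfl, rfl⟩ := hM
  obtain ⟨d, η, l, hd, rfl, rfl⟩ := hN
  obtain ⟨s, hs, hsη⟩ := semiconjBy_pauli_R η
  obtain ⟨e, ζ, he, hξη⟩ := pauli_mul_pauli ξ η
  refine ⟨c * d * e, ζ, s * k + l, by rw [mul_pow, mul_pow, hc, hd, he, one_mul, one_mul], ?_, ?_⟩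
  · push_cast [hs.natCast_zmod_two]
    ring
  · have hcomm : R ^ k * pauli η = pauli η * R ^ (s * k) := by
      rw [pow_mul]
      exact (hsη.pow_right k).eq.symm
    calc c • (pauli ξ * R ^ k) * d • (pauli η * R ^ l)
        = (c * d) • (pauli ξ * (R ^ k * pauli η) * R ^ l) := by
          rw [smul_mul_smul_comm]
          simp only [mul_assoc]
      _ = (c * d) • (pauli ξ * pauli η * R ^ (s * k + l)) := by
          rw [hcomm, pow_add]
          simp only [mul_assoc]
      _ = (c * d * e) • (pauli ζ * R ^ (s * k + l)) := by
          rw [hξη, smul_mul_assoc, smul_smul]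

lemma IsPauliRot.map_conj {M : Matrix (Fin 2) (Fin 2) ℂ} {p : ZMod 2} (hM : IsPauliRot M p) :
    IsPauliRot (M.map (starRingEnd ℂ)) p := by
  obtain ⟨c, ξ, k, hc, rfl, rfl⟩ := hM
  obtain ⟨e, he, hξ⟩ := map_conj_pauli ξ
  refine ⟨starRingEnd ℂ c * e, ξ, 15 * k, ?_, ?_, ?_⟩
  · rw [mul_pow, ← map_pow, hc, he, map_one, one_mul]
  · rw [Nat.cast_mul, (by decide : Odd 15).natCast_zmod_two, one_mul]
  · rw [Matrix.map_smul', Matrix.map_mul, hξ, Matrix.map_pow, map_conj_R, ← pow_mul, smul_mul_assoc,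
      smul_smul]
    exact map_mul _

lemma IsPauliRot.exists_odd_zmod_eight {M : Matrix (Fin 2) (Fin 2) ℂ} (hM : IsPauliRot M 1) :
    ∃ ξ : ZMod 4, ∃ mstar : ZMod 8, Odd mstar.val ∧
      ∃ c ∈ ({1, -1, I, -I} : Set ℂ), M = c • (pauli ξ * R ^ mstar.val) := by
  obtain ⟨c, ξ, k, hc, hk, rfl⟩ := hM
  refine ⟨ξ, k, ?_, c * (-1) ^ (k / 8), mem_of_pow_four_eq_one ?_, ?_⟩
  · rw [ZMod.val_natCast]
    exact (ZMod.natCast_eq_one_iff_odd.mp hk).mod_even (by decide)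
  · rw [mul_pow, hc, one_mul, ← pow_mul, mul_comm, pow_mul]
    norm_num
  · rw [ZMod.val_natCast, R_pow_eq_neg_one_pow_smul k, mul_smul_comm, smul_smul]

/-- Group closure underlying swap(Φ,Φ,Φ) ⊆ ¼Φ: for all μ, ν, λ ∈ ℤ₄ and
odd m, m', m'' ∈ ℤ₈ there are ξ ∈ ℤ₄, odd m* ∈ ℤ₈ and c ∈ {1, −1, i, −i} with
σ_λ R^{m''} (σ_ν R^{m'})‾ σ_μ R^{m} = c σ_ξ R^{m*}. -/
theorem stmt_14 (μ ν lam : ZMod 4) (m m' m'' : ZMod 8)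
    (hm : Odd m.val) (hm' : Odd m'.val) (hm'' : Odd m''.val) :
    ∃ ξ : ZMod 4, ∃ mstar : ZMod 8, Odd mstar.val ∧
      ∃ c ∈ ({1, -1, Complex.I, -Complex.I} : Set ℂ),
        pauli lam * R ^ m''.val * (pauli ν * R ^ m'.val).map (starRingEnd ℂ) *
            pauli μ * R ^ m.val
          = c • (pauli ξ * R ^ mstar.val) := by
  have h := ((isPauliRot_pauli_mul_R_pow lam m''.val).mul
    (isPauliRot_pauli_mul_R_pow ν m'.val).map_conj).mul (isPauliRot_pauli_mul_R_pow μ m.val)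
  rw [hm.natCast_zmod_two, hm'.natCast_zmod_two, hm''.natCast_zmod_two, ← mul_assoc] at h
  exact h.exists_odd_zmod_eight
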